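/- arXiv:1904.12811 — 5 statements merged into one kernel-verified Lean document; each statement's English description precedes it below -/
import Mathlib

section
/- For every integer n ≥ 1, the sum over j = 0, 1, …, 2n+1 of the rational numbers ((−1)^{j−n−1} (n+1) / (2j−2n−1)) · C(2n+1, n) · C(2n+1, j) equals 2^{4n+1}. -/
/-!
Up to the factor `(-1)^n (n+1) C(2n+1, n) / 2`, the sum is the `(2n+1)`-st forward difference of
`x ↦ 1/x` at `x = -(2n+1)/2`, and `Δ^m (1/x) = (-1)^m m! / (x (x+1) ⋯ (x+m))`. At this point the
product `x (x+1) ⋯ (x+2n+1)` pairs off into `(-1)^(n+1) ((2n+1)‼)² / 2^(2n+2)`, and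
`(2n+1)! = (2n+1)‼ 2^n n!` reduces the result to `2^(4n+1)`.
-/

open Finset Polynomial fwdDiff
open scoped Nat

lemma neg_one_zpow_natCast_sub_natCast {R : Type*} [DivisionRing R] (a b : ℕ) :
    (-1 : R) ^ ((a : ℤ) - b) = (-1) ^ a * (-1) ^ b := by
  rw [zpow_sub₀ (by norm_num), zpow_natCast, zpow_natCast, div_eq_mul_inv, ← inv_pow, inv_neg_one]

lemma ascPochhammer_succ_eval_eq_mul_eval_add_one {S : Type*} [CommSemiring S] (n : ℕ) (x : S) :
    (ascPochhammer S (n + 1)).eval x = x * (ascPochhammer S n).eval (x + 1) := by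
  simp [ascPochhammer_succ_left, eval_comp]

variable {K : Type*} [Field K]

theorem fwdDiff_iter_inv (m : ℕ) {x : K} (hx : (ascPochhammer K (m + 1)).eval x ≠ 0) :
    (Δ_[1])^[m] (·⁻¹) x = (-1) ^ m * m ! / (ascPochhammer K (m + 1)).eval x := by
  induction m generalizing x with
  | zero => simp
  | succ m ih =>
    have hright := ascPochhammer_succ_eval (S := K) (m + 1) x
    have hleft := ascPochhammer_succ_eval_eq_mul_eval_add_one (m + 1) x
    have hx₀ : (ascPochhammer K (m + 1)).eval x ≠ 0 := by
      rw [hright] at hx; exact left_ne_zero_of_mul hx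
    have hx₁ : (ascPochhammer K (m + 1)).eval (x + 1) ≠ 0 := by
      rw [hleft] at hx; exact right_ne_zero_of_mul hx
    rw [Function.iterate_succ_apply', fwdDiff, ih hx₀, ih hx₁, eq_div_iff hx, Nat.factorial_succ]
    field_simp
    push_cast at hright ⊢
    -- `m + 1 = (x + m + 1) - x`, matched against the two factorisations of the product
    linear_combination (-1) ^ m * (m ! : K) *
      ((ascPochhammer K (m + 1)).eval x * hleft - (ascPochhammer K (m + 1)).eval (x + 1) * hright)

theorem ascPochhammer_eval_neg_half_odd [NeZero (2 : K)] (n : ℕ) :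
    (ascPochhammer K (2 * n + 2)).eval (-(2 * n + 1 : K) / 2) =
      (-1) ^ (n + 1) * ((2 * n + 1)‼ : K) ^ 2 / 2 ^ (2 * n + 2) := by
  induction n with
  | zero =>
    simp only [Nat.cast_zero, mul_zero, zero_add, ascPochhammer_succ_eval, ascPochhammer_one,
      eval_X, Nat.cast_one, pow_one, Nat.doubleFactorial, one_pow, mul_one]
    field_simp
    ring
  | succ n ih =>
    rw [show 2 * (n + 1) + 2 = 2 * n + 2 + 1 + 1 by ring,
      ascPochhammer_succ_eval_eq_mul_eval_add_one, ascPochhammer_succ_eval]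
    push_cast
    rw [show -(2 * ((n : K) + 1) + 1) / 2 + 1 = -(2 * n + 1) / 2 by field_simp; ring, ih,
      show 2 * (n + 1) + 1 = 2 * n + 1 + 2 by ring, Nat.doubleFactorial_add_two]
    push_cast
    field_simp
    ring

lemma sum_deslauriers_dubuc_coeffs_eq_fwdDiff (n : ℕ) :
    ∑ j ∈ range (2 * n + 2),
      ((-1 : ℚ) ^ ((j : ℤ) - n - 1) * (n + 1) / ((2 * (j : ℤ) - 2 * n - 1 : ℤ) : ℚ)) *
        ((2 * n + 1).choose n : ℚ) * ((2 * n + 1).choose j : ℚ) =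
      (-1) ^ n * (n + 1) * (2 * n + 1).choose n / 2 *
        (Δ_[1])^[2 * n + 1] (·⁻¹) (-(2 * n + 1 : ℚ) / 2) := by
  rw [fwdDiff_iter_eq_sum_shift, mul_sum]
  refine sum_congr rfl fun j hj ↦ ?_
  have hj : j ≤ 2 * n + 1 := Nat.lt_succ_iff.mp (mem_range.mp hj)
  have hden : (2 * (j : ℤ) - 2 * n - 1 : ℤ) ≠ 0 := by omega
  have hsign : (j : ℤ) - n - 1 = n - ((2 * n + 1 - j : ℕ) : ℤ) := by omega
  have hshift : -(2 * n + 1 : ℚ) / 2 + j • 1 = (2 * (j : ℤ) - 2 * n - 1 : ℤ) / 2 := by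
    push_cast; ring
  rw [hsign, neg_one_zpow_natCast_sub_natCast, hshift, zsmul_eq_mul]
  push_cast at hden ⊢
  field_simp

theorem sum_deslauriers_dubuc_coeffs_general (n : ℕ) :
    ∑ j ∈ Finset.range (2 * n + 2),
      ((-1 : ℚ) ^ ((j : ℤ) - n - 1) * (n + 1) / ((2 * (j : ℤ) - 2 * n - 1 : ℤ) : ℚ)) *
        (Nat.choose (2 * n + 1) n : ℚ) * (Nat.choose (2 * n + 1) j : ℚ)
      = 2 ^ (4 * n + 1) := by
  have hprod := ascPochhammer_eval_neg_half_odd (K := ℚ) n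
  have hprod₀ : (ascPochhammer ℚ (2 * n + 1 + 1)).eval (-(2 * n + 1 : ℚ) / 2) ≠ 0 := by
    rw [hprod]; simp [(Nat.doubleFactorial_pos _).ne']
  have hfact : ((2 * n + 1)! : ℚ) = (2 * n + 1)‼ * (2 ^ n * n !) := by
    rw [Nat.factorial_eq_mul_doubleFactorial, Nat.doubleFactorial_two_mul]; push_cast; rfl
  have hchoose : ((2 * n + 1).choose n : ℚ) * ((n + 1) * n !) * n ! = (2 * n + 1)! := by
    have := Nat.add_choose_mul_factorial_mul_factorial (n + 1) n
    rw [show n + 1 + n = 2 * n + 1 by ring, Nat.factorial_succ] at this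
    exact_mod_cast this
  rw [sum_deslauriers_dubuc_coeffs_eq_fwdDiff, fwdDiff_iter_inv _ hprod₀, hprod,
    pow_succ (-1 : ℚ) n, Odd.neg_one_pow ⟨n, rfl⟩]
  field_simp
  -- multiply by `(n!)²` so that `hchoose` enters without division
  refine mul_right_cancel₀ (pow_ne_zero 2 (Nat.cast_ne_zero.mpr n.factorial_ne_zero)) ?_
  linear_combination (2 * n + 1)! * 2 ^ (2 * n + 2) * hchoose +
    2 ^ (2 * n + 2) * ((2 * n + 1)! + (2 * n + 1)‼ * 2 ^ n * n !) * hfact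

theorem sum_deslauriers_dubuc_coeffs (n : ℕ) (hn : 1 ≤ n) :
    ∑ j ∈ Finset.range (2 * n + 2),
      ((-1 : ℚ) ^ ((j : ℤ) - n - 1) * (n + 1) / ((2 * (j : ℤ) - 2 * n - 1 : ℤ) : ℚ)) *
        (Nat.choose (2 * n + 1) n : ℚ) * (Nat.choose (2 * n + 1) j : ℚ)
      = 2 ^ (4 * n + 1) :=
  sum_deslauriers_dubuc_coeffs_general n
end

section
/- For every integer n ≥ 1 and every real α, the (2n+2)-point combined binary subdivision scheme reproduces polynomials of degree at most 1: for every real polynomial p with deg p ≤ 1 and every real x, Σ_{j=0}^{2n} v_j · p(x + j − n) = p(x) and Σ_{j=0}^{2n+1} e_j · p(x + j − n) = p(x + 1/2). -/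
/-- The Deslauriers–Dubuc coefficients of the `(2n+2)`-point interpolatory scheme. -/
noncomputable def ddCoef (n j : ℕ) : ℝ :=
  (1 / 2 ^ (4 * n + 1)) *
    ((-1 : ℝ) ^ ((j : ℤ) - n - 1) * (n + 1) / ((2 * (j : ℤ) - 2 * n - 1 : ℤ) : ℝ)) *
    (Nat.choose (2 * n + 1) n : ℝ) * (Nat.choose (2 * n + 1) j : ℝ)

/-- The vertex-rule coefficients of the `(2n+2)`-point combined binary subdivision scheme. -/
noncomputable def vCoef (n : ℕ) (α : ℝ) (j : ℕ) : ℝ :=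
  if j = n then
    1 + α - α / 2 ^ (4 * n + 1) * (Nat.choose (4 * n + 2) (2 * n + 1) : ℝ)
  else
    -(α / 2 ^ (4 * n + 1)) * (Nat.choose (4 * n + 2) (2 * j + 1) : ℝ)

/-- The edge-rule coefficients of the `(2n+2)`-point combined binary subdivision scheme. -/
noncomputable def eCoef (n : ℕ) (α : ℝ) (j : ℕ) : ℝ :=
  (1 + α) * ddCoef n j - α / 2 ^ (4 * n + 1) * (Nat.choose (4 * n + 2) (2 * j) : ℝ)

/-!
A stencil `w₀, …, w_N` of total mass `1` that is symmetric (`w (N - j) = w j`) has first moment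
`N / 2`, so it maps a polynomial of degree at most one to its value at the centre of the stencil.
The vertex coefficients are symmetric about `n` and the edge coefficients about `n + 1/2`, by the
symmetry of binomial coefficients. Their masses are `1` because the odd-indexed and the
even-indexed entries of row `4n + 2` of Pascal's triangle both sum to `2 ^ (4n + 1)`, and because
the Deslauriers–Dubuc weights sum to `1`: up to a constant they are the terms of the partial
fraction decomposition `∑ (-1)^j C(m, j) / (x + j) = m! / (x (x + 1) ⋯ (x + m))` at
`m = 2n + 1`, `x = -(n + 1/2)`.
-/

open Finset Polynomial

theorem Finset.sum_range_two_mul {M : Type*} [AddCommMonoid M] (m : ℕ) (f : ℕ → M) :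
    ∑ i ∈ range (2 * m), f i = ∑ j ∈ range m, (f (2 * j) + f (2 * j + 1)) := by
  induction m with
  | zero => simp
  | succ m ih => rw [Nat.mul_succ, sum_range_succ, sum_range_succ, sum_range_succ, ih, add_assoc]

theorem Nat.sum_range_choose_odd (m : ℕ) :
    ∑ j ∈ range (m + 1), (2 * m + 2).choose (2 * j + 1) = 2 ^ (2 * m + 1) := by
  have hpascal : ∀ j, (2 * m + 2).choose (2 * j + 1)
      = (2 * m + 1).choose (2 * j) + (2 * m + 1).choose (2 * j + 1) :=
    fun j => Nat.choose_succ_succ' _ _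
  rw [sum_congr rfl fun j _ => hpascal j, ← sum_range_two_mul, ← Nat.sum_range_choose]
  rfl

theorem Nat.sum_range_choose_even (m : ℕ) :
    ∑ j ∈ range (m + 2), (2 * m + 2).choose (2 * j) = 2 ^ (2 * m + 1) := by
  have hall := sum_range_two_mul (m + 2) ((2 * m + 2).choose ·)
  rw [show 2 * (m + 2) = 2 * m + 2 + 1 + 1 by ring, sum_range_succ, Nat.sum_range_choose,
    Nat.choose_eq_zero_of_lt (by omega), sum_add_distrib,
    sum_range_succ (fun j => (2 * m + 2).choose (2 * j + 1)),
    Nat.sum_range_choose_odd, Nat.choose_eq_zero_of_lt (by omega : 2 * m + 2 < 2 * (m + 1) + 1),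
    pow_succ] at hall
  omega

theorem two_mul_sum_range_mul_cast_of_symm {R : Type*} [CommRing R] (w : ℕ → R) (N : ℕ)
    (hw : ∀ j ≤ N, w (N - j) = w j) :
    2 * ∑ j ∈ range (N + 1), w j * j = N * ∑ j ∈ range (N + 1), w j := by
  have hreflect : ∑ j ∈ range (N + 1), w j * j = ∑ j ∈ range (N + 1), w j * (N - j) := by
    rw [← sum_range_reflect]
    refine sum_congr rfl fun j hj => ?_
    have hj : j ≤ N := Nat.lt_succ_iff.1 (mem_range.1 hj)
    rw [Nat.add_sub_cancel, hw j hj, Nat.cast_sub hj]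
  rw [two_mul]
  nth_rewrite 1 [hreflect]
  rw [← sum_add_distrib, mul_sum]
  exact sum_congr rfl fun j _ => by ring

theorem Polynomial.sum_mul_eval_add_of_degree_le_one {R ι : Type*} [CommRing R] (s : Finset ι)
    (w t : ι → R) {p : R[X]} (hp : p.degree ≤ 1) (hw : ∑ i ∈ s, w i = 1) (x : R) :
    ∑ i ∈ s, w i * p.eval (x + t i) = p.eval (x + ∑ i ∈ s, w i * t i) := by
  rw [eq_X_add_C_of_degree_le_one hp]
  simp only [eval_add, eval_mul, eval_C, eval_X]
  have hsplit : ∀ i ∈ s, w i * (p.coeff 1 * (x + t i) + p.coeff 0)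
      = (p.coeff 1 * x + p.coeff 0) * w i + p.coeff 1 * (w i * t i) := fun i _ => by ring
  rw [sum_congr rfl hsplit, sum_add_distrib, ← mul_sum, ← mul_sum, hw]
  ring

theorem sum_range_mul_eval_add_of_symm {K : Type*} [Field K] [CharZero K] (w : ℕ → K) (N : ℕ)
    (hw : ∀ j ≤ N, w (N - j) = w j) (hsum : ∑ j ∈ range (N + 1), w j = 1) {p : K[X]}
    (hp : p.degree ≤ 1) (x : K) :
    ∑ j ∈ range (N + 1), w j * p.eval (x + j) = p.eval (x + N / 2) := by
  rw [sum_mul_eval_add_of_degree_le_one _ _ _ hp hsum]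
  have hmoment := two_mul_sum_range_mul_cast_of_symm w N hw
  rw [hsum, mul_one] at hmoment
  rw [← hmoment, mul_div_cancel_left₀ _ two_ne_zero]

theorem ascPochhammer_eval_succ_left {S : Type*} [CommSemiring S] (m : ℕ) (x : S) :
    (ascPochhammer S (m + 1)).eval x = x * (ascPochhammer S m).eval (x + 1) := by
  rw [ascPochhammer_succ_left, eval_mul, eval_X, eval_comp, eval_add, eval_X, eval_one]

theorem sum_range_choose_mul_neg_one_pow_div {K : Type*} [Field K] (m : ℕ) (x : K)
    (hx : ∀ j ≤ m, x + j ≠ 0) :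
    ∑ j ∈ range (m + 1), (m.choose j : K) * ((-1) ^ j / (x + j))
      = m.factorial / (ascPochhammer K (m + 1)).eval x := by
  induction m generalizing x with
  | zero => simp
  | succ m ih =>
    have hxm : x + (m + 1 : ℕ) ≠ 0 := hx (m + 1) le_rfl
    have hA : (ascPochhammer K (m + 1)).eval x ≠ 0 := by
      rw [Ne, ascPochhammer_eval_eq_zero_iff]
      rintro ⟨k, hk, hkx⟩
      exact hx k (by omega) (by rw [hkx]; ring)
    have hA1 : (ascPochhammer K (m + 1)).eval (x + 1) ≠ 0 := by
      rw [Ne, ascPochhammer_eval_eq_zero_iff]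
      rintro ⟨k, hk, hkx⟩
      exact hx (k + 1) (by omega) (by push_cast; rw [hkx]; ring)
    -- Pascal's rule: `S (m + 1) x = S m x - S m (x + 1)` for the sum `S` on the left.
    have hpascal := sum_choose_succ_mul (fun j _ => (-1 : K) ^ j / (x + j)) m
    have hshift : ∑ j ∈ range (m + 1), (m.choose j : K) * ((-1) ^ (j + 1) / (x + (j + 1 : ℕ)))
        = -∑ j ∈ range (m + 1), (m.choose j : K) * ((-1) ^ j / (x + 1 + j)) := by
      rw [← sum_neg_distrib]
      refine sum_congr rfl fun j _ => ?_
      push_cast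
      ring
    rw [hpascal, hshift, ih x fun j hj => hx j (by omega),
      ih (x + 1) fun j hj => by simpa [add_assoc, add_comm (1 : K)] using hx (j + 1) (by omega),
      Nat.factorial_succ]
    have hright := ascPochhammer_succ_eval (m + 1) x
    have hleft := ascPochhammer_eval_succ_left (m + 1) x
    rw [← sub_eq_add_neg, div_sub_div _ _ hA hA1, hright,
      div_eq_div_iff (mul_ne_zero hA hA1) (mul_ne_zero hA hxm)]
    push_cast at hright ⊢
    linear_combination (-(m.factorial : K) * (ascPochhammer K (m + 1)).eval x) * (hleft - hright)

theorem ascPochhammer_eval_neg_add_half_mul {K : Type*} [Field K] [CharZero K] (n : ℕ) :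
    (ascPochhammer K (2 * n + 2)).eval (-((n : K) + 1 / 2)) * (n.factorial ^ 2 * 2 ^ (4 * n + 2))
      = (-1) ^ (n + 1) * (2 * n + 1).factorial ^ 2 := by
  induction n with
  | zero => norm_num [ascPochhammer_succ_eval]
  | succ n ih =>
    have hstep : (ascPochhammer K (2 * (n + 1) + 2)).eval (-(((n + 1 : ℕ) : K) + 1 / 2))
        = -((n : K) + 3 / 2) ^ 2 * (ascPochhammer K (2 * n + 2)).eval (-((n : K) + 1 / 2)) := by
      rw [show 2 * (n + 1) + 2 = 2 * n + 2 + 1 + 1 by ring, ascPochhammer_eval_succ_left,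
        ascPochhammer_succ_eval]
      push_cast
      ring_nf
    rw [hstep, show 2 * (n + 1) + 1 = 2 * n + 1 + 1 + 1 by ring, Nat.factorial_succ,
      Nat.factorial_succ, Nat.factorial_succ]
    push_cast
    linear_combination (-(2 * (n : K) + 3) ^ 2 * (2 * n + 2) ^ 2) * ih

theorem ddCoef_eq (n j : ℕ) :
    ddCoef n j = (-1) ^ (n + 1) * (n + 1) * (2 * n + 1).choose n / 2 ^ (4 * n + 2) *
      ((2 * n + 1).choose j * ((-1) ^ j / (-((n : ℝ) + 1 / 2) + j))) := by
  have hsign : (-1 : ℝ) ^ ((j : ℤ) - n - 1) = (-1) ^ j * (-1) ^ (n + 1) := by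
    rw [show (j : ℤ) - n - 1 = (j + (n + 1) : ℕ) - 2 * ((n + 1 : ℕ) : ℤ) by push_cast; ring,
      zpow_sub₀ (by norm_num), zpow_mul, zpow_natCast, zpow_natCast, pow_add]
    norm_num
  have hdenom : ((2 * (j : ℤ) - 2 * n - 1 : ℤ) : ℝ) = 2 * (-((n : ℝ) + 1 / 2) + j) := by
    push_cast; ring
  rw [ddCoef, hsign, hdenom, pow_succ _ (4 * n + 1)]
  generalize -((n : ℝ) + 1 / 2) + j = d
  ring

theorem ddCoef_symm (n j : ℕ) (hj : j ≤ 2 * n + 1) : ddCoef n (2 * n + 1 - j) = ddCoef n j := by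
  have hsign : (-1 : ℝ) ^ (2 * n + 1 - j) = -(-1) ^ j := by
    have hsum : (-1 : ℝ) ^ (2 * n + 1 - j) * (-1) ^ j = -1 := by
      rw [← pow_add, Nat.sub_add_cancel hj, pow_succ, pow_mul]
      norm_num
    have hsq : (-1 : ℝ) ^ j * (-1) ^ j = 1 := by rw [← mul_pow]; norm_num
    linear_combination (-1 : ℝ) ^ j * hsum - (-1 : ℝ) ^ (2 * n + 1 - j) * hsq
  have hdenom : -((n : ℝ) + 1 / 2) + (2 * n + 1 - j : ℕ) = -(-((n : ℝ) + 1 / 2) + j) := by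
    push_cast [hj]; ring
  rw [ddCoef_eq, ddCoef_eq, Nat.choose_symm hj, hsign, hdenom, neg_div_neg_eq]

theorem sum_ddCoef (n : ℕ) : ∑ j ∈ range (2 * n + 2), ddCoef n j = 1 := by
  have hnode : ∀ j ≤ 2 * n + 1, -((n : ℝ) + 1 / 2) + j ≠ 0 := by
    intro j _ h
    have h2 : ((2 * j : ℕ) : ℝ) = (2 * n + 1 : ℕ) := by push_cast; linarith
    have hparity := Nat.cast_injective h2
    omega
  have hchoose : ((2 * n + 1).choose n : ℝ) * n.factorial * ((n + 1) * n.factorial)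
      = (2 * n + 1).factorial := by
    have h := Nat.choose_mul_factorial_mul_factorial (show n ≤ 2 * n + 1 by omega)
    rw [show 2 * n + 1 - n = n + 1 by omega, Nat.factorial_succ] at h
    exact_mod_cast h
  have hA := ascPochhammer_eval_neg_add_half_mul (K := ℝ) n
  have hA0 : (ascPochhammer ℝ (2 * n + 2)).eval (-((n : ℝ) + 1 / 2)) ≠ 0 := by
    intro h
    rw [h, zero_mul] at hA
    exact absurd hA.symm (by positivity)
  rw [sum_congr rfl fun j _ => ddCoef_eq n j, ← mul_sum, show 2 * n + 2 = 2 * n + 1 + 1 from rfl,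
    sum_range_choose_mul_neg_one_pow_div _ _ hnode]
  generalize (ascPochhammer ℝ (2 * n + 2)).eval (-((n : ℝ) + 1 / 2)) = A at hA hA0 ⊢
  field_simp
  refine mul_right_cancel₀ (pow_ne_zero 2 (Nat.cast_ne_zero.2 n.factorial_ne_zero)) ?_
  linear_combination (-1 : ℝ) ^ (n + 1) * (2 * n + 1).factorial * hchoose - hA

theorem vCoef_eq (n : ℕ) (α : ℝ) (j : ℕ) :
    vCoef n α j =
      (if j = n then 1 + α else 0) - α / 2 ^ (4 * n + 1) * (4 * n + 2).choose (2 * j + 1) := by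
  unfold vCoef
  split_ifs with h
  · rw [h]
  · ring

theorem vCoef_symm (n : ℕ) (α : ℝ) {j : ℕ} (hj : j ≤ 2 * n) :
    vCoef n α (2 * n - j) = vCoef n α j := by
  rw [vCoef_eq, vCoef_eq, show 2 * (2 * n - j) + 1 = 4 * n + 2 - (2 * j + 1) by omega,
    Nat.choose_symm (by omega)]
  simp only [show 2 * n - j = n ↔ j = n by omega]

theorem sum_vCoef (n : ℕ) (α : ℝ) : ∑ j ∈ range (2 * n + 1), vCoef n α j = 1 := by
  have hodd :
      ∑ j ∈ range (2 * n + 1), ((4 * n + 2).choose (2 * j + 1) : ℝ) = 2 ^ (4 * n + 1) := by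
    have h := Nat.sum_range_choose_odd (2 * n)
    rw [show 2 * (2 * n) + 2 = 4 * n + 2 by ring, show 2 * (2 * n) + 1 = 4 * n + 1 by ring] at h
    exact_mod_cast h
  rw [sum_congr rfl fun j _ => vCoef_eq n α j, sum_sub_distrib, sum_ite_eq',
    if_pos (mem_range.2 (by omega)), ← mul_sum, hodd]
  field_simp
  ring

theorem eCoef_symm (n : ℕ) (α : ℝ) {j : ℕ} (hj : j ≤ 2 * n + 1) :
    eCoef n α (2 * n + 1 - j) = eCoef n α j := by
  rw [eCoef, eCoef, ddCoef_symm n j hj, show 2 * (2 * n + 1 - j) = 4 * n + 2 - 2 * j by omega,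
    Nat.choose_symm (by omega)]

theorem sum_eCoef (n : ℕ) (α : ℝ) : ∑ j ∈ range (2 * n + 2), eCoef n α j = 1 := by
  have heven :
      ∑ j ∈ range (2 * n + 2), ((4 * n + 2).choose (2 * j) : ℝ) = 2 ^ (4 * n + 1) := by
    have h := Nat.sum_range_choose_even (2 * n)
    rw [show 2 * (2 * n) + 2 = 4 * n + 2 by ring, show 2 * (2 * n) + 1 = 4 * n + 1 by ring] at h
    exact_mod_cast h
  simp only [eCoef]
  rw [sum_sub_distrib, ← mul_sum, ← mul_sum, sum_ddCoef, heven]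
  field_simp
  ring

theorem combined_scheme_linear_reproduction_general (n : ℕ) (α : ℝ)
    (p : Polynomial ℝ) (hp : p.degree ≤ 1) (x : ℝ) :
    (∑ j ∈ Finset.range (2 * n + 1), vCoef n α j * p.eval (x + j - n) = p.eval x) ∧
    (∑ j ∈ Finset.range (2 * n + 2), eCoef n α j * p.eval (x + j - n)
      = p.eval (x + 1 / 2)) := by
  have hv := sum_range_mul_eval_add_of_symm _ (2 * n) (fun _ => vCoef_symm n α) (sum_vCoef n α)
    hp (x - n)
  have he := sum_range_mul_eval_add_of_symm _ (2 * n + 1) (fun _ => eCoef_symm n α)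
    (sum_eCoef n α) hp (x - n)
  simp only [sub_add_eq_add_sub] at hv he
  push_cast at hv he
  rw [show x + 2 * n / 2 - n = x by ring] at hv
  rw [show x + (2 * n + 1) / 2 - n = x + 1 / 2 by ring] at he
  exact ⟨hv, he⟩

/-- The (2n+2)-point combined scheme reproduces polynomials of degree at most 1. -/
theorem combined_scheme_linear_reproduction (n : ℕ) (hn : 1 ≤ n) (α : ℝ)
    (p : Polynomial ℝ) (hp : p.degree ≤ 1) (x : ℝ) :
    (∑ j ∈ Finset.range (2 * n + 1), vCoef n α j * p.eval (x + j - n) = p.eval x) ∧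
    (∑ j ∈ Finset.range (2 * n + 2), eCoef n α j * p.eval (x + j - n)
      = p.eval (x + 1 / 2)) :=
  combined_scheme_linear_reproduction_general n α p hp x
end

section
/- For every integer n ≥ 1, every real polynomial p with deg p ≤ 2n+1, and every real x, Σ_{j=0}^{2n+1} d_j · p(x + j − n) = p(x + 1/2), where d_j = (1/2^{4n+1}) · ((−1)^{j−n−1}(n+1)/(2j−2n−1)) · C(2n+1, n) · C(2n+1, j). -/
/-! The nodes `x_k = x + k - n`, `k < 2n + 2`, are distinct, so `p` is its own Lagrange
interpolant on them and the claim reduces to `L_j (x + 1/2) = d_j` for the Lagrange basis.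
In barycentric form `L_j t = ℓ(t) w_j / (t - x_j)`, with nodal weight
`w_j⁻¹ = ∏_{k ≠ j} (j - k) = (-1)^(2n+1-j) j! (2n+1-j)!` and
`ℓ(x + 1/2) = ∏ (2n+1-2k)/2 = (-1)^(n+1) (2n+1)‼² / 2^(2n+2)`.
The identity `(2n+1)‼² 4ⁿ = (n+1) C(2n+1, n) (2n+1)!` turns this into the closed form of `d_j`. -/

open Finset Polynomial Lagrange
open scoped Nat

section Products

variable {R : Type*} [CommRing R]

theorem prod_range_natCast_sub_self (j : ℕ) : ∏ k ∈ range j, ((j : R) - k) = j ! := by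
  induction j with
  | zero => simp
  | succ j ih =>
    rw [prod_range_succ', Nat.factorial_succ]
    push_cast
    simp only [add_sub_add_right_eq_sub, ih, sub_zero]
    ring

theorem prod_range_neg_natCast_succ (l : ℕ) :
    ∏ i ∈ range l, (-((i : R) + 1)) = (-1) ^ l * l ! := by
  induction l with
  | zero => simp
  | succ l ih =>
    rw [prod_range_succ, ih, Nat.factorial_succ]
    push_cast
    ring

theorem prod_erase_range_natCast_sub {m j : ℕ} (hj : j < m) :
    ∏ k ∈ (range m).erase j, ((j : R) - k) = (-1) ^ (m - 1 - j) * j ! * (m - 1 - j)! := by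
  obtain ⟨l, rfl⟩ : ∃ l, m = j + 1 + l := ⟨m - 1 - j, by omega⟩
  have hsplit : (range (j + 1 + l)).erase j = range j ∪ Ico (j + 1) (j + 1 + l) := by
    ext k; simp only [mem_erase, mem_range, mem_union, mem_Ico]; omega
  rw [hsplit, prod_union (disjoint_left.2 fun k hk hk' => by simp at hk hk'; omega),
    prod_range_natCast_sub_self, prod_Ico_eq_prod_range, Nat.add_sub_cancel_left,
    show j + 1 + l - 1 - j = l by omega]
  simp_rw [show ∀ i : ℕ, (j : R) - ((j + 1 + i : ℕ) : R) = -((i : R) + 1) from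
    fun i => by push_cast; ring]
  rw [prod_range_neg_natCast_succ]
  ring

theorem prod_range_two_mul_add_one (n : ℕ) :
    ∏ k ∈ range (n + 1), (2 * (k : R) + 1) = ((2 * n + 1)‼ : ℕ) := by
  induction n with
  | zero => simp
  | succ n ih =>
    rw [prod_range_succ, ih, show 2 * (n + 1) + 1 = 2 * n + 1 + 2 by ring,
      Nat.doubleFactorial_add_two]
    push_cast
    ring

theorem prod_range_odd_sub_two_mul (n : ℕ) :
    ∏ k ∈ range (2 * n + 2), ((2 * n + 1 : R) - 2 * k) =
      (-1) ^ (n + 1) * ((2 * n + 1)‼ : ℕ) ^ 2 := by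
  have hlow : ∏ k ∈ range (n + 1), ((2 * n + 1 : R) - 2 * k) = ((2 * n + 1)‼ : ℕ) := by
    rw [← prod_range_two_mul_add_one, ← prod_range_reflect]
    refine prod_congr rfl fun k hk => ?_
    rw [Nat.cast_sub (by simp at hk; omega)]
    push_cast
    ring
  have hhigh : ∏ k ∈ range (n + 1), ((2 * n + 1 : R) - 2 * ((n + 1 + k : ℕ) : R)) =
      (-1) ^ (n + 1) * ((2 * n + 1)‼ : ℕ) := by
    simp_rw [show ∀ k, (2 * n + 1 : R) - 2 * ((n + 1 + k : ℕ) : R) = -1 * (2 * k + 1) from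
      fun k => by push_cast; ring]
    rw [prod_mul_distrib, prod_const, card_range, prod_range_two_mul_add_one]
  rw [show 2 * n + 2 = (n + 1) + (n + 1) by ring, prod_range_add, hlow, hhigh]
  ring

end Products

theorem doubleFactorial_two_mul_add_one_sq (n : ℕ) :
    (2 * n + 1)‼ ^ 2 * 4 ^ n = (n + 1) * (2 * n + 1).choose n * (2 * n + 1)! := by
  have hfac : (2 * n + 1)! = (2 * n + 1)‼ * 2 ^ n * n ! := by
    rw [Nat.factorial_eq_mul_doubleFactorial, Nat.doubleFactorial_two_mul, mul_assoc]
  have hchoose := Nat.choose_mul_factorial_mul_factorial (show n ≤ 2 * n + 1 by omega)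
  rw [show 2 * n + 1 - n = n + 1 by omega, Nat.factorial_succ] at hchoose
  apply Nat.eq_of_mul_eq_mul_right (pow_pos n.factorial_pos 2)
  calc (2 * n + 1)‼ ^ 2 * 4 ^ n * n ! ^ 2 = ((2 * n + 1)‼ * 2 ^ n * n !) ^ 2 := by
        rw [show (4 : ℕ) ^ n = (2 ^ n) ^ 2 by rw [← pow_mul, mul_comm, pow_mul]; norm_num]; ring
    _ = (2 * n + 1)! * (2 * n + 1)! := by rw [← hfac]; ring
    _ = _ := by nth_rw 1 [← hchoose]; ring

theorem two_mul_add_one_sub_two_mul_ne_zero {F : Type*} [Ring F] [CharZero F] (n j : ℕ) :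
    (2 * n + 1 - 2 * j : F) ≠ 0 := by
  rw [sub_ne_zero]
  exact_mod_cast (by omega : 2 * n + 1 ≠ 2 * j)

theorem ddCoef_eq_div (n j : ℕ) :
    ddCoef n j = (-1) ^ (j + n) * (n + 1) * (2 * n + 1).choose n * (2 * n + 1).choose j /
      (2 ^ (4 * n + 1) * (2 * n + 1 - 2 * j : ℝ)) := by
  have hsign : (-1 : ℝ) ^ ((j : ℤ) - n - 1) = -(-1) ^ (j + n) := by
    rw [show (j : ℤ) - n - 1 = ((j + n + 1 : ℕ) : ℤ) + 2 * (-(n + 1 : ℤ)) by push_cast; ring,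
      zpow_add₀ (by norm_num), zpow_mul, zpow_natCast]
    simp [pow_succ]
  have hne := two_mul_add_one_sub_two_mul_ne_zero (F := ℝ) n j
  rw [ddCoef, hsign,
    show ((2 * (j : ℤ) - 2 * n - 1 : ℤ) : ℝ) = -(2 * n + 1 - 2 * j) by push_cast; ring]
  field_simp

theorem nodalWeight_range_of_sub_eq {F : Type*} [Field F] {v : ℕ → F}
    (hv : ∀ i k, v i - v k = i - k) {m j : ℕ} (hj : j < m) :
    nodalWeight (range m) v j = ((-1) ^ (m - 1 - j) * j ! * (m - 1 - j)! : F)⁻¹ := by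
  simp only [nodalWeight, hv, prod_inv_distrib, prod_erase_range_natCast_sub hj]

theorem eval_basis_midpoint_eq_ddCoef (n : ℕ) {j : ℕ} (hj : j < 2 * n + 2) (x : ℝ) :
    (Lagrange.basis (range (2 * n + 2)) (fun k : ℕ => x + k - n) j).eval (x + 1 / 2) =
      ddCoef n j := by
  obtain ⟨i, hi⟩ : ∃ i, 2 * n + 2 - 1 - j = i := ⟨_, rfl⟩
  have hji : j + i = 2 * n + 1 := by omega
  have hdiff : ∀ k : ℕ, x + 1 / 2 - (x + k - n) = (2 * n + 1 - 2 * k) / 2 := fun k => by ring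
  have hne := two_mul_add_one_sub_two_mul_ne_zero (F := ℝ) n j
  have hnodal : ∏ k ∈ range (2 * n + 2), (x + 1 / 2 - (x + k - n))
      = (-1) ^ (n + 1) * ((2 * n + 1)‼ : ℕ) ^ 2 / 2 ^ (2 * n + 2) := by
    simp_rw [hdiff, div_eq_mul_inv, prod_mul_distrib, prod_const, card_range,
      prod_range_odd_sub_two_mul, inv_pow]
  have hsign : ((-1 : ℝ) ^ i)⁻¹ = -(-1) ^ j := by
    rw [← inv_pow, inv_neg, inv_one, neg_eq_neg_one_mul ((-1 : ℝ) ^ j), ← pow_succ',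
      neg_one_pow_eq_pow_mod_two, neg_one_pow_eq_pow_mod_two (n := j + 1)]
    congr 1
    omega
  have hsq : (((2 * n + 1)‼ : ℕ) : ℝ) ^ 2 =
      (n + 1) * (2 * n + 1).choose n * (2 * n + 1)! / 2 ^ (2 * n) := by
    rw [eq_div_iff (by positivity), pow_mul, show (2 : ℝ) ^ 2 = 4 by norm_num]
    exact_mod_cast doubleFactorial_two_mul_add_one_sq n
  have hchoose : ((2 * n + 1).choose j : ℝ) = (2 * n + 1)! / (j ! * i !) := by
    rw [eq_div_iff (by positivity), ← mul_assoc, ← hji]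
    have := Nat.choose_mul_factorial_mul_factorial (Nat.le_add_right j i)
    rw [Nat.add_sub_cancel_left] at this
    exact_mod_cast this
  rw [eval_basis_not_at_node (mem_range.2 hj) (by rw [← sub_ne_zero, hdiff]; simpa using hne),
    eval_nodal, hnodal, nodalWeight_range_of_sub_eq (fun _ _ => by ring) hj, hi, hdiff,
    ddCoef_eq_div, hsq, hchoose, mul_inv, mul_inv, hsign]
  field_simp
  ring

theorem dd_polynomial_reproduction_general (n : ℕ)
    (p : Polynomial ℝ) (hp : p.degree ≤ 2 * n + 1) (x : ℝ) :
    ∑ j ∈ Finset.range (2 * n + 2), ddCoef n j * p.eval (x + j - n)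
      = p.eval (x + 1 / 2) := by
  have hinj : Set.InjOn (fun k : ℕ => x + k - n) (range (2 * n + 2)) :=
    fun a _ b _ h => by simpa using h
  have hdeg : p.degree < #(range (2 * n + 2)) := by
    rw [card_range]
    exact hp.trans_lt (by exact_mod_cast Nat.lt_succ_self (2 * n + 1))
  conv_rhs => rw [eq_interpolate hinj hdeg, interpolate_apply, eval_finsetSum]
  refine sum_congr rfl fun j hj => ?_
  rw [eval_mul, eval_C, eval_basis_midpoint_eq_ddCoef n (mem_range.1 hj), mul_comm]

/-- The Deslauriers–Dubuc coefficients reproduce polynomials of degree at most 2n+1. -/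
theorem dd_polynomial_reproduction (n : ℕ) (hn : 1 ≤ n)
    (p : Polynomial ℝ) (hp : p.degree ≤ 2 * n + 1) (x : ℝ) :
    ∑ j ∈ Finset.range (2 * n + 2), ddCoef n j * p.eval (x + j - n)
      = p.eval (x + 1 / 2) :=
  dd_polynomial_reproduction_general n p hp x
end

section
/- For every integer n ≥ 1 and every real α, the polynomial (1+X)^{2n+2} divides the symbol a(X) = Σ_{j=0}^{2n+1} e_j X^{2j} + Σ_{j=0}^{2n} v_j X^{2j+1} of the (2n+2)-point combined binary subdivision scheme in ℝ[X]. -/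
namespace SymbolSmoothnessAux

open Finset Nat Polynomial

lemma aux_sum_even_odd {M : Type*} [AddCommMonoid M] (N : ℕ) (f : ℕ → M) :
    ∑ m ∈ range (2 * N + 1), f m
      = ∑ j ∈ range (N + 1), f (2 * j) + ∑ j ∈ range N, f (2 * j + 1) := by
  induction N with
  | zero => simp
  | succ N ih =>
      have h : 2 * (N + 1) + 1 = (2 * N + 1) + 1 + 1 := by ring
      rw [h, sum_range_succ, sum_range_succ, ih,
        sum_range_succ (fun j => f (2 * j)) (N + 1),
        sum_range_succ (fun j => f (2 * j + 1)) N]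
      have h2 : 2 * N + 1 + 1 = 2 * (N + 1) := by ring
      rw [h2]
      abel

lemma aux_fact_odd (n : ℕ) :
    (2 * n + 1)! = 2 ^ n * n ! * ∏ i ∈ range (n + 1), (2 * i + 1) := by
  induction n with
  | zero => simp
  | succ n ih =>
      have h : 2 * (n + 1) + 1 = (2 * n + 1) + 1 + 1 := by ring
      rw [h, Nat.factorial_succ, Nat.factorial_succ,
        prod_range_succ (fun i => 2 * i + 1) (n + 1), ih, Nat.factorial_succ]
      ring

lemma aux_prod_range_fac (j : ℕ) : ∏ i ∈ range j, ((j : ℝ) - i) = j ! := by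
  have h := Finset.prod_range_reflect (fun i => ((i : ℝ) + 1)) j
  rw [← Finset.prod_range_add_one_eq_factorial j]
  push_cast
  rw [← h]
  apply Finset.prod_congr rfl
  intro i hi
  rw [mem_range] at hi
  have : (↑(j - 1 - i) : ℝ) = (j : ℝ) - 1 - i := by
    have h1 : i ≤ j - 1 := by omega
    have h2 : (1:ℕ) ≤ j := by omega
    push_cast [Nat.cast_sub h1, Nat.cast_sub h2]
    ring
  rw [this]; ring

lemma aux_prod_Ico (j m : ℕ) (h : j < m) :
    ∏ i ∈ Ico (j + 1) m, ((j : ℝ) - i) = (-1) ^ (m - 1 - j) * (m - 1 - j)! := by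
  rw [Finset.prod_Ico_eq_prod_range]
  have hc : ∀ i ∈ range (m - (j+1)), ((j:ℝ) - ((j + 1 + i : ℕ) : ℝ)) = (-1) * ((i:ℝ) + 1) := by
    intro i _; push_cast; ring
  rw [Finset.prod_congr rfl hc, Finset.prod_mul_distrib, Finset.prod_const]
  have h2 : m - (j + 1) = m - 1 - j := by omega
  rw [h2, card_range]
  congr 1
  exact_mod_cast Finset.prod_range_add_one_eq_factorial (m - 1 - j)

lemma aux_erase_eq (j m : ℕ) (h : j < m) :
    (range m).erase j = range j ∪ Ico (j + 1) m := by
  ext x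
  simp only [mem_erase, mem_range, mem_union, mem_Ico]
  omega

lemma aux_prod_erase (j m : ℕ) (h : j < m) :
    ∏ i ∈ (range m).erase j, ((j : ℝ) - i)
      = (-1) ^ (m - 1 - j) * j ! * (m - 1 - j)! := by
  rw [aux_erase_eq j m h, Finset.prod_union, aux_prod_range_fac, aux_prod_Ico j m h]
  · ring
  · rw [Finset.disjoint_left]; intro x hx hx'
    simp only [mem_range] at hx
    simp only [mem_Ico] at hx'
    omega

lemma aux_prod_full (n : ℕ) :
    ∏ i ∈ range (2 * n + 2), ((2 * n + 1 : ℝ) - 2 * i)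
      = (-1) ^ (n + 1) * (∏ i ∈ range (n + 1), (2 * (i:ℝ) + 1)) ^ 2 := by
  have hsplit : ∏ i ∈ range ((n + 1) + (n + 1)), ((2 * n + 1 : ℝ) - 2 * i)
      = (∏ i ∈ range (n + 1), ((2 * n + 1 : ℝ) - 2 * i))
        * ∏ i ∈ range (n + 1), ((2 * n + 1 : ℝ) - 2 * ((n + 1 + i : ℕ) : ℝ)) := by
    exact Finset.prod_range_add (fun i => ((2 * n + 1 : ℝ) - 2 * i)) (n+1) (n+1)
  have h1 : (2 * n + 2) = (n + 1) + (n + 1) := by ring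
  rw [h1, hsplit]
  have h2 : ∏ i ∈ range (n + 1), ((2 * n + 1 : ℝ) - 2 * i)
      = ∏ i ∈ range (n + 1), (2 * (i:ℝ) + 1) := by
    have := Finset.prod_range_reflect (fun i => (2 * (i:ℝ) + 1)) (n + 1)
    rw [← this]
    apply Finset.prod_congr rfl
    intro i hi
    rw [mem_range] at hi
    have : ((n + 1 - 1 - i : ℕ) : ℝ) = (n : ℝ) - i := by
      have : n + 1 - 1 - i = n - i := by omega
      rw [this, Nat.cast_sub (by omega)]
    rw [this]; ring
  have h3 : ∏ i ∈ range (n + 1), ((2 * n + 1 : ℝ) - 2 * ((n + 1 + i : ℕ) : ℝ))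
      = (-1) ^ (n + 1) * ∏ i ∈ range (n + 1), (2 * (i:ℝ) + 1) := by
    have hc : ∀ i ∈ range (n + 1),
        ((2 * n + 1 : ℝ) - 2 * ((n + 1 + i : ℕ) : ℝ)) = (-1) * (2 * (i:ℝ) + 1) := by
      intro i _; push_cast; ring
    rw [Finset.prod_congr rfl hc, Finset.prod_mul_distrib, Finset.prod_const, card_range]
  rw [h2, h3]; ring

lemma aux_basis_eval (n j : ℕ) (hj : j < 2 * n + 2) :
    eval ((2 * n + 1 : ℕ) : ℝ) (Lagrange.basis (range (2 * n + 2)) (fun i => 2 * (i : ℝ)) j)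
      = ddCoef n j := by
  classical
  have hjm : j ∈ range (2 * n + 2) := by simpa using hj
  rw [Lagrange.basis, eval_prod]
  have hterm : ∀ i ∈ (range (2 * n + 2)).erase j,
      eval ((2 * n + 1 : ℕ) : ℝ) (Lagrange.basisDivisor (2 * (j:ℝ)) (2 * (i:ℝ)))
        = (2 * (j:ℝ) - 2 * i)⁻¹ * ((2 * n + 1 : ℝ) - 2 * i) := by
    intro i _
    simp [Lagrange.basisDivisor]
  rw [Finset.prod_congr rfl hterm, Finset.prod_mul_distrib, Finset.prod_inv_distrib]
  have hP1 : ∏ x ∈ (range (2 * n + 2)).erase j, (2 * (j:ℝ) - 2 * x)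
      = 2 ^ (2 * n + 1) * ((-1) ^ (2 * n + 1 - j) * j ! * (2 * n + 1 - j)!) := by
    have hc : ∀ i ∈ (range (2 * n + 2)).erase j,
        (2 * (j:ℝ) - 2 * i) = 2 * ((j:ℝ) - i) := by intro i _; ring
    rw [Finset.prod_congr rfl hc, Finset.prod_mul_distrib, Finset.prod_const,
      Finset.card_erase_of_mem hjm, card_range]
    have h1 : 2 * n + 2 - 1 = 2 * n + 1 := by omega
    have h2 : 2 * n + 2 - 1 - j = 2 * n + 1 - j := by omega
    rw [h1, aux_prod_erase j (2 * n + 2) hj, h2]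
  have hP2 : ((2 * n + 1 : ℝ) - 2 * j) * ∏ x ∈ (range (2 * n + 2)).erase j, ((2 * n + 1 : ℝ) - 2 * x)
      = (-1) ^ (n + 1) * (∏ i ∈ range (n + 1), (2 * (i:ℝ) + 1)) ^ 2 := by
    rw [← aux_prod_full n]
    exact Finset.mul_prod_erase (range (2 * n + 2)) (fun i => (2 * n + 1 : ℝ) - 2 * i) hjm
  have ht0 : ((2 * n + 1 : ℝ) - 2 * j) ≠ 0 := by
    intro hcontra
    have h01 : (2 * (j:ℝ)) = 2 * n + 1 := by linarith
    have : (2 * j : ℕ) = 2 * n + 1 := by exact_mod_cast h01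
    omega
  have hP2' : ∏ x ∈ (range (2 * n + 2)).erase j, ((2 * n + 1 : ℝ) - 2 * x)
      = (-1) ^ (n + 1) * (∏ i ∈ range (n + 1), (2 * (i:ℝ) + 1)) ^ 2 / ((2 * n + 1 : ℝ) - 2 * j) := by
    field_simp
    linarith [hP2]
  rw [hP1, hP2']
  -- numeric identity
  have hjle : j ≤ 2 * n + 1 := by omega
  set K := ∏ i ∈ range (n + 1), (2 * (i:ℝ) + 1) with hKdef
  have hK : (2 : ℝ) ^ n * n ! * K = ((2 * n + 1)! : ℝ) := by
    rw [aux_fact_odd n]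
    push_cast
    ring
  have hCj : ((2 * n + 1).choose j : ℝ) = ((2 * n + 1)! : ℝ) / (j ! * (2 * n + 1 - j)!) :=
    Nat.cast_choose ℝ hjle
  have hCn : ((2 * n + 1).choose n : ℝ) = ((2 * n + 1)! : ℝ) / (n ! * (n + 1)!) := by
    rw [Nat.cast_choose ℝ (by omega : n ≤ 2 * n + 1), show 2 * n + 1 - n = n + 1 from by omega]
  have hz : ((2 * (j : ℤ) - 2 * n - 1 : ℤ) : ℝ) = -((2 * n + 1 : ℝ) - 2 * j) := by
    push_cast; ring
  have hKne : K ≠ 0 := by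
    rw [hKdef]
    apply Finset.prod_ne_zero_iff.mpr
    intro i _
    positivity
  have hfj : (j ! : ℝ) ≠ 0 := by exact_mod_cast j.factorial_ne_zero
  have hfb : ((2 * n + 1 - j)! : ℝ) ≠ 0 := by exact_mod_cast (2 * n + 1 - j).factorial_ne_zero
  have hfn : (n ! : ℝ) ≠ 0 := by exact_mod_cast n.factorial_ne_zero
  have hfn1 : ((n + 1)! : ℝ) ≠ 0 := by exact_mod_cast (n + 1).factorial_ne_zero
  have hOF : ((2 * n + 1)! : ℝ) = 2 ^ n * n ! * K := hK.symm
  rw [ddCoef, hCj, hCn, hz, hOF]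
  have hfn1' : ((n + 1)! : ℝ) = (n + 1) * n ! := by
    push_cast [Nat.factorial_succ]; ring
  rw [hfn1']
  set P := (2:ℝ) ^ n with hP
  have e1 : (2:ℝ) ^ (2 * n + 1) = 2 * P ^ 2 := by rw [hP, ← pow_mul]; ring
  have e2 : (2:ℝ) ^ (4 * n + 1) = 2 * P ^ 4 := by rw [hP, ← pow_mul]; ring
  have hPne : P ≠ 0 := by positivity
  rw [e1, e2]
  set t := (2 * (n:ℝ) + 1 - 2 * (j:ℝ)) with hT
  set fj := (j ! : ℝ) with hFJ
  set fb := ((2 * n + 1 - j)! : ℝ) with hFB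
  set fn := (n ! : ℝ) with hFN
  rcases Nat.even_or_odd j with hje | hjo
  · have h1 : Odd (2 * n + 1 - j) := by
      rcases hje with ⟨k, hk⟩; exact ⟨n - k, by omega⟩
    rcases Nat.even_or_odd n with hne | hno
    · have hA : (-1 : ℝ) ^ (n + 1) = -1 := Odd.neg_one_pow (by rcases hne with ⟨k,hk⟩; exact ⟨k, by omega⟩)
      have hB : Odd ((j : ℤ) - n - 1) := by
        rcases hje with ⟨k, hk⟩; rcases hne with ⟨m, hm⟩
        exact ⟨(k : ℤ) - m - 1, by push_cast [hk, hm]; ring⟩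
      rw [h1.neg_one_pow, hB.neg_one_zpow, hA]
      field_simp
    · have hA : (-1 : ℝ) ^ (n + 1) = 1 := Even.neg_one_pow (by rcases hno with ⟨k,hk⟩; exact ⟨k+1, by omega⟩)
      have hB : Even ((j : ℤ) - n - 1) := by
        rcases hje with ⟨k, hk⟩; rcases hno with ⟨m, hm⟩
        exact ⟨(k : ℤ) - m - 1, by push_cast [hk, hm]; ring⟩
      rw [h1.neg_one_pow, hB.neg_one_zpow, hA]
      field_simp
  · have h1 : Even (2 * n + 1 - j) := by
      rcases hjo with ⟨k, hk⟩; exact ⟨n - k, by omega⟩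
    rcases Nat.even_or_odd n with hne | hno
    · have hA : (-1 : ℝ) ^ (n + 1) = -1 := Odd.neg_one_pow (by rcases hne with ⟨k,hk⟩; exact ⟨k, by omega⟩)
      have hB : Even ((j : ℤ) - n - 1) := by
        rcases hjo with ⟨k, hk⟩; rcases hne with ⟨m, hm⟩
        exact ⟨(k : ℤ) - m, by push_cast [hk, hm]; ring⟩
      rw [h1.neg_one_pow, hB.neg_one_zpow, hA]
      field_simp
    · have hA : (-1 : ℝ) ^ (n + 1) = 1 := Even.neg_one_pow (by rcases hno with ⟨k,hk⟩; exact ⟨k+1, by omega⟩)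
      have hB : Odd ((j : ℤ) - n - 1) := by
        rcases hjo with ⟨k, hk⟩; rcases hno with ⟨m, hm⟩
        exact ⟨(k : ℤ) - m - 1, by push_cast [hk, hm]; ring⟩
      rw [h1.neg_one_pow, hB.neg_one_zpow, hA]
      field_simp

lemma aux_key_sum (n d : ℕ) (hd : d < 2 * n + 2) :
    ∑ j ∈ range (2 * n + 2), ddCoef n j * ((2 * j).descFactorial d : ℝ)
      = ((2 * n + 1).descFactorial d : ℝ) := by
  have hinj : Set.InjOn (fun i : ℕ => 2 * (i : ℝ)) (range (2 * n + 2)) := by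
    intro a _ b _ hab
    simp only at hab
    exact_mod_cast mul_left_cancel₀ (two_ne_zero) hab
  have hdeg : (descPochhammer ℝ d).degree < (#(range (2 * n + 2)) : ℕ) := by
    rw [card_range]
    have h1 : (descPochhammer ℝ d).degree = (d : ℕ) := by
      rw [Polynomial.degree_eq_natDegree (monic_descPochhammer ℝ d).ne_zero,
        descPochhammer_natDegree]
    rw [h1]
    exact_mod_cast hd
  have h := Lagrange.eq_interpolate hinj hdeg
  have heval := congrArg (eval ((2 * n + 1 : ℕ) : ℝ)) h
  rw [Lagrange.interpolate_apply, eval_finset_sum] at heval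
  simp only [eval_mul, eval_C] at heval
  rw [descPochhammer_eval_eq_descFactorial] at heval
  calc ∑ j ∈ range (2 * n + 2), ddCoef n j * ((2 * j).descFactorial d : ℝ)
      = ∑ j ∈ range (2 * n + 2),
          (descPochhammer ℝ d).eval ((fun i : ℕ => 2 * (i : ℝ)) j) *
            eval ((2 * n + 1 : ℕ) : ℝ)
              (Lagrange.basis (range (2 * n + 2)) (fun i : ℕ => 2 * (i : ℝ)) j) := by
        apply Finset.sum_congr rfl
        intro j hjm
        rw [mem_range] at hjm
        rw [aux_basis_eval n j hjm]
        have : (fun i : ℕ => 2 * (i : ℝ)) j = ((2 * j : ℕ) : ℝ) := by push_cast; ring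
        rw [this, descPochhammer_eval_eq_descFactorial]
        ring
    _ = ((2 * n + 1).descFactorial d : ℝ) := heval.symm

lemma aux_key_sum_choose (n d : ℕ) (hd : d < 2 * n + 2) :
    ∑ j ∈ range (2 * n + 2), ddCoef n j * ((2 * j).choose d : ℝ)
      = ((2 * n + 1).choose d : ℝ) := by
  have hfac : (d ! : ℝ) ≠ 0 := by exact_mod_cast d.factorial_ne_zero
  apply mul_left_cancel₀ hfac
  rw [Finset.mul_sum]
  have h := aux_key_sum n d hd
  calc ∑ j ∈ range (2 * n + 2), (d ! : ℝ) * (ddCoef n j * ((2 * j).choose d : ℝ))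
      = ∑ j ∈ range (2 * n + 2), ddCoef n j * ((2 * j).descFactorial d : ℝ) := by
        apply Finset.sum_congr rfl
        intro j _
        rw [Nat.descFactorial_eq_factorial_mul_choose]
        push_cast
        ring
    _ = ((2 * n + 1).descFactorial d : ℝ) := h
    _ = (d ! : ℝ) * ((2 * n + 1).choose d : ℝ) := by
        rw [Nat.descFactorial_eq_factorial_mul_choose]; push_cast; ring

lemma aux_sign_even (m d : ℕ) (h : d ≤ 2 * m) : (-1 : ℝ) ^ (2 * m - d) = (-1) ^ d := by
  have h2 : (-1 : ℝ) ^ (2 * m - d) * (-1) ^ d = 1 := by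
    rw [← pow_add, show 2 * m - d + d = 2 * m from by omega, pow_mul]
    norm_num
  have h3 : ((-1 : ℝ) ^ d) * ((-1 : ℝ) ^ d) = 1 := by
    rw [← pow_add, ← two_mul, pow_mul]; norm_num
  have hne : ((-1 : ℝ) ^ d) ≠ 0 := by
    intro hc; rw [hc, mul_zero] at h3; norm_num at h3
  field_simp at h2 ⊢
  calc (-1 : ℝ) ^ (2 * m - d) = ((-1:ℝ)^d)⁻¹ := by
        field_simp
        linarith [h2]
    _ = (-1 : ℝ) ^ d := by
        rw [inv_eq_of_mul_eq_one_right h3]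

lemma aux_sign_odd (m d : ℕ) (h : d ≤ 2 * m + 1) :
    (-1 : ℝ) ^ (2 * m + 1 - d) = -(-1) ^ d := by
  rcases Nat.eq_zero_or_pos d with hd0 | hdpos
  · subst hd0; simp [pow_succ, pow_mul]
  · have h1 : 2 * m + 1 - d = 2 * m - (d - 1) := by omega
    rw [h1, aux_sign_even m (d - 1) (by omega)]
    have h2 : d = (d - 1) + 1 := by omega
    rw [h2, pow_succ]
    ring_nf
    rw [show 1 + (d - 1) - 1 = d - 1 from by omega]

lemma aux_dd_dvd (n : ℕ) :
    (1 + X : Polynomial ℝ) ^ (2 * n + 2) ∣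
      (∑ j ∈ range (2 * n + 2), C (ddCoef n j) * X ^ (2 * j) + X ^ (2 * n + 1)) := by
  have h1 : (1 + X : Polynomial ℝ) = X - C (-1) := by simp [sub_neg_eq_add]; ring
  rw [h1, Polynomial.X_sub_C_pow_dvd_iff, Polynomial.X_pow_dvd_iff]
  intro d hd
  rw [← Polynomial.taylor_apply, Polynomial.taylor_coeff]
  simp only [map_add, map_sum]
  rw [eval_add, eval_finset_sum]
  have hmono : ∀ (m : ℕ) (a : ℝ), Polynomial.hasseDeriv d (C a * X ^ m)
      = C (a * (m.choose d : ℝ)) * X ^ (m - d) := by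
    intro m a
    rw [Polynomial.C_mul_X_pow_eq_monomial, Polynomial.hasseDeriv_monomial,
      ← Polynomial.C_mul_X_pow_eq_monomial]
    congr 1
    rw [mul_comm]
  have hterm : ∀ j ∈ range (2 * n + 2),
      eval (-1) (Polynomial.hasseDeriv d (C (ddCoef n j) * X ^ (2 * j)))
        = ddCoef n j * ((2 * j).choose d : ℝ) * (-1) ^ d := by
    intro j _
    rw [hmono]
    rw [eval_mul, eval_C, eval_pow, eval_X]
    by_cases hdj : d ≤ 2 * j
    · rw [aux_sign_even j d hdj]
    · rw [Nat.choose_eq_zero_of_lt (by omega)]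
      simp
  rw [Finset.sum_congr rfl hterm]
  have hlast : eval (-1) (Polynomial.hasseDeriv d ((X : Polynomial ℝ) ^ (2 * n + 1)))
      = -(((2 * n + 1).choose d : ℝ) * (-1) ^ d) := by
    have h0 : (X : Polynomial ℝ) ^ (2 * n + 1) = C (1:ℝ) * X ^ (2 * n + 1) := by simp
    rw [h0, hmono, eval_mul, eval_C, eval_pow, eval_X, aux_sign_odd n d (by omega)]
    ring
  rw [hlast]
  have hsum : ∑ j ∈ range (2 * n + 2), ddCoef n j * ((2 * j).choose d : ℝ) * (-1) ^ d
      = (∑ j ∈ range (2 * n + 2), ddCoef n j * ((2 * j).choose d : ℝ)) * (-1) ^ d := by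
    rw [Finset.sum_mul]
  rw [hsum, aux_key_sum_choose n d hd]
  ring

lemma aux_binom_expand (n : ℕ) :
    ((1 + X : Polynomial ℝ)) ^ (4 * n + 2)
      = ∑ j ∈ range (2 * n + 2), C (((4 * n + 2).choose (2 * j) : ℝ)) * X ^ (2 * j)
        + ∑ j ∈ range (2 * n + 1), C (((4 * n + 2).choose (2 * j + 1) : ℝ)) * X ^ (2 * j + 1) := by
  have h := add_pow (X : Polynomial ℝ) 1 (4 * n + 2)
  rw [add_comm (X : Polynomial ℝ) 1] at h
  rw [h]
  have h2 : ∀ m : ℕ, (X : Polynomial ℝ) ^ m * 1 ^ (4 * n + 2 - m) * ((4 * n + 2).choose m : Polynomial ℝ)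
      = C (((4 * n + 2).choose m : ℝ)) * X ^ m := by
    intro m
    rw [one_pow, mul_one, mul_comm]
    norm_cast
  have h3 : 4 * n + 2 + 1 = 2 * (2 * n + 1) + 1 := by ring
  rw [Finset.sum_congr rfl (fun m _ => h2 m), h3,
    aux_sum_even_odd (2 * n + 1) (fun m => C (((4 * n + 2).choose m : ℝ)) * X ^ m)]

end SymbolSmoothnessAux

open Polynomial in
/-- (1+X)^(2n+2) divides the symbol of the (2n+2)-point combined scheme. -/
theorem symbol_smoothness_factor (n : ℕ) (hn : 1 ≤ n) (α : ℝ) :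
    (1 + X : Polynomial ℝ) ^ (2 * n + 2) ∣
      (∑ j ∈ Finset.range (2 * n + 2), C (eCoef n α j) * X ^ (2 * j) +
       ∑ j ∈ Finset.range (2 * n + 1), C (vCoef n α j) * X ^ (2 * j + 1)) := by
  classical
  open SymbolSmoothnessAux Finset in
  have key : (∑ j ∈ Finset.range (2 * n + 2), C (eCoef n α j) * X ^ (2 * j) +
       ∑ j ∈ Finset.range (2 * n + 1), C (vCoef n α j) * X ^ (2 * j + 1))
      = C (1 + α) * (∑ j ∈ range (2 * n + 2), C (ddCoef n j) * X ^ (2 * j) + X ^ (2 * n + 1))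
        + C (-(α / 2 ^ (4 * n + 1))) * (1 + X) ^ (4 * n + 2) := by
    rw [aux_binom_expand n]
    have he : ∀ j ∈ range (2 * n + 2), C (eCoef n α j) * X ^ (2 * j)
        = C (1 + α) * (C (ddCoef n j) * X ^ (2 * j))
          + C (-(α / 2 ^ (4 * n + 1))) * (C (((4 * n + 2).choose (2 * j) : ℝ)) * X ^ (2 * j)) := by
      intro j _
      rw [eCoef]
      rw [show ((1 + α) * ddCoef n j - α / 2 ^ (4 * n + 1) * ((4 * n + 2).choose (2 * j) : ℝ))
          = (1 + α) * ddCoef n j + (-(α / 2 ^ (4 * n + 1))) * ((4 * n + 2).choose (2 * j) : ℝ)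
          from by ring, map_add, map_mul, map_mul]
      ring
    have hv : ∀ j ∈ range (2 * n + 1), C (vCoef n α j) * X ^ (2 * j + 1)
        = C (-(α / 2 ^ (4 * n + 1))) * (C (((4 * n + 2).choose (2 * j + 1) : ℝ)) * X ^ (2 * j + 1))
          + (if j = n then C (1 + α) * X ^ (2 * n + 1) else 0) := by
      intro j _
      by_cases hjn : j = n
      · rw [hjn, vCoef, if_pos rfl, if_pos rfl]
        rw [show (1 + α - α / 2 ^ (4 * n + 1) * ((4 * n + 2).choose (2 * n + 1) : ℝ))
            = (-(α / 2 ^ (4 * n + 1))) * ((4 * n + 2).choose (2 * n + 1) : ℝ) + (1 + α)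
            from by ring, map_add, map_mul]
        ring
      · rw [vCoef, if_neg hjn, if_neg hjn, map_mul, add_zero]
        ring
    rw [Finset.sum_congr rfl he, Finset.sum_congr rfl hv,
      Finset.sum_add_distrib, Finset.sum_add_distrib,
      Finset.sum_ite_eq' (range (2 * n + 1)) n (fun _ => C (1 + α) * X ^ (2 * n + 1)),
      if_pos (by simp; omega : n ∈ range (2 * n + 1)),
      ← Finset.mul_sum, ← Finset.mul_sum, ← Finset.mul_sum]
    ring
  rw [key]
  apply dvd_add
  · exact Dvd.dvd.mul_left (aux_dd_dvd n) _
  · apply Dvd.dvd.mul_left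
    exact pow_dvd_pow (1 + X) (by omega)
end

section
/- For a real number α, the mask (a_0,…,a_6) = (−1/16 − 3α/32, −3α/16, 9/16 + 3α/32, 1 + 3α/8, 9/16 + 3α/32, −3α/16, −1/16 − 3α/32) of the 4-point combined scheme is bell-shaped — i.e., a_j > 0 for all j ∈ {0,…,6}, a_j = a_{6−j} for all j ∈ {0,…,6}, and a_j < a_{j+1} for j ∈ {0, 1, 2} — if and only if −14/9 < α < −2/3. -/
/-!
Every entry of the mask is affine in α, and the mask is symmetric for every α. The two
binding constraints are a₀ > 0, i.e. α < -2/3, and a₂ < a₃, i.e. α > -14/9; on the interval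
they cut out, the remaining positivity and monotonicity conditions hold with room to spare.
-/

/-- The mask (a₀,…,a₆) of the 4-point combined scheme. -/
noncomputable def fourPointMask (α : ℝ) : Fin 7 → ℝ :=
  ![-1 / 16 - 3 * α / 32, -3 * α / 16, 9 / 16 + 3 * α / 32, 1 + 3 * α / 8,
    9 / 16 + 3 * α / 32, -3 * α / 16, -1 / 16 - 3 * α / 32]

theorem fourPointMask_symm (α : ℝ) (j : Fin 7) :
    fourPointMask α j = fourPointMask α (6 - j) := by
  fin_cases j <;> rfl

section

variable {α : ℝ}

theorem fourPointMask_zero_pos_iff : 0 < fourPointMask α 0 ↔ α < -2 / 3 := by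
  simp only [fourPointMask, Matrix.cons_val_zero]
  constructor <;> intro h <;> linarith

theorem fourPointMask_two_lt_three_iff :
    fourPointMask α 2 < fourPointMask α 3 ↔ -14 / 9 < α := by
  simp only [fourPointMask, Matrix.cons_val]
  constructor <;> intro h <;> linarith

theorem fourPointMask_pos (hlo : -14 / 9 < α) (hhi : α < -2 / 3) (j : Fin 7) :
    0 < fourPointMask α j := by
  fin_cases j <;> simp [fourPointMask] <;> linarith

theorem fourPointMask_lt_succ (hlo : -14 / 9 < α) (hhi : α < -2 / 3) (j : Fin 7)
    (hj : (j : ℕ) < 3) :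
    fourPointMask α j < fourPointMask α (j + 1) := by
  fin_cases j <;> simp [fourPointMask] at hj ⊢ <;> linarith

end

/-- The mask of the 4-point combined scheme is bell-shaped iff −14/9 < α < −2/3. -/
theorem four_point_mask_bell_shaped_iff (α : ℝ) :
    ((∀ j : Fin 7, 0 < fourPointMask α j) ∧
     (∀ j : Fin 7, fourPointMask α j = fourPointMask α (6 - j)) ∧
     (∀ j : Fin 7, (j : ℕ) < 3 → fourPointMask α j < fourPointMask α (j + 1))) ↔
    -14 / 9 < α ∧ α < -2 / 3 := by
  constructor
  · rintro ⟨hpos, -, hmono⟩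
    exact ⟨fourPointMask_two_lt_three_iff.1 (hmono 2 (by decide)),
      fourPointMask_zero_pos_iff.1 (hpos 0)⟩
  · rintro ⟨hlo, hhi⟩
    exact ⟨fourPointMask_pos hlo hhi, fourPointMask_symm α, fourPointMask_lt_succ hlo hhi⟩
end
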